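/- arXiv:0909.2433 — 2 statements merged into one kernel-verified Lean document; each statement's English description precedes it below -/
import Mathlib

section
/- For every real number 0 < q < 1, every positive integer k, and every real t > 0, the q,k-gamma function is given by the convergent series Γ_{q,k}(t) = (1-q)^{1-t/k} · ∑_{n=0}^∞ q^{kn(n+1)/2} / ( (1-q^{kn+t}) (q^k - 1)^n [n]_{q^k}! ). -/
/-- The q,k-gamma function
Γ_{q,k}(t) = (1-q)^(1-t/k) · ∏_{j=0}^∞ (1-q^{k(j+1)})/(1-q^{t+jk}). -/
noncomputable def qkGamma (q : ℝ) (k : ℕ) (t : ℝ) : ℝ :=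
  (1 - q) ^ (1 - t / (k : ℝ)) *
    ∏' j : ℕ, (1 - q ^ ((k : ℝ) * ((j : ℝ) + 1))) / (1 - q ^ (t + (j : ℝ) * (k : ℝ)))

/-- The Q-factorial [n]_Q! = ∏_{j=1}^n (1-Q^j)/(1-Q). -/
noncomputable def qFact (Q : ℝ) (n : ℕ) : ℝ :=
  ∏ j ∈ Finset.range n, (1 - Q ^ (j + 1)) / (1 - Q)

/-!
With `Q = q^k` and `x = q^t`, the product defining `Γ_{q,k}` is `(Q;Q)_∞ / (x;Q)_∞`, and the `n`-th
term of the series is `e_n Q^n / (1 - x Q^n)` with Euler's coefficients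
`e_n = (-1)^n Q^(n(n-1)/2) / (Q;Q)_n`. Expanding `1 / (1 - x Q^n)` geometrically and swapping the
two sums gives `∑_m x^m ∑_n e_n (Q^(m+1))^n`. Euler's identities `∑ e_n z^n = (z;Q)_∞` and
`∑ z^m / (Q;Q)_m = 1 / (z;Q)_∞` then evaluate the inner sum as
`(Q^(m+1);Q)_∞ = (Q;Q)_∞ / (Q;Q)_m` and the outer one as `(Q;Q)_∞ / (x;Q)_∞`.
Both identities hold because the series are continuous at `0` with value `1` and satisfy
`f z = (1 - z) f (Q z)`, resp. `f (Q z) = (1 - z) f z`: iterating these and letting the argument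
`Q^N z` tend to `0` pins `f` down.
-/

open Finset Filter Topology

noncomputable section

def qPochhammer (Q z : ℝ) (n : ℕ) : ℝ := ∏ j ∈ range n, (1 - z * Q ^ j)

def qPochhammerInf (Q z : ℝ) : ℝ := ∏' j : ℕ, (1 - z * Q ^ j)

section QPochhammer

variable {Q z : ℝ}

lemma qPochhammer_zero : qPochhammer Q z 0 = 1 := prod_range_zero _

lemma qPochhammer_succ (n : ℕ) :
    qPochhammer Q z (n + 1) = qPochhammer Q z n * (1 - z * Q ^ n) :=
  prod_range_succ _ _

lemma qPochhammer_self_succ (n : ℕ) :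
    qPochhammer Q Q (n + 1) = qPochhammer Q Q n * (1 - Q ^ (n + 1)) := by
  rw [qPochhammer_succ, pow_succ']

lemma qPochhammer_add (m n : ℕ) :
    qPochhammer Q z (m + n) = qPochhammer Q z m * qPochhammer Q (z * Q ^ m) n := by
  simp only [qPochhammer, prod_range_add, mul_assoc, ← pow_add]

lemma abs_pow_mul_lt_one (hQ : |Q| ≤ 1) (hz : |z| < 1) (n : ℕ) : |Q ^ n * z| < 1 := by
  rw [abs_mul, abs_pow]
  exact lt_of_le_of_lt (mul_le_of_le_one_left (abs_nonneg z) (pow_le_one₀ (abs_nonneg Q) hQ)) hz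

lemma summable_norm_mul_pow (hQ : |Q| < 1) (z : ℝ) : Summable fun j : ℕ => ‖-(z * Q ^ j)‖ := by
  simpa only [norm_neg, norm_mul, norm_pow, Real.norm_eq_abs] using
    (summable_geometric_of_lt_one (abs_nonneg Q) hQ).mul_left |z|

lemma multipliable_one_sub_mul_pow (hQ : |Q| < 1) (z : ℝ) :
    Multipliable fun j : ℕ => 1 - z * Q ^ j := by
  simpa only [sub_eq_add_neg] using multipliable_one_add_of_summable (summable_norm_mul_pow hQ z)

lemma tendsto_qPochhammer (hQ : |Q| < 1) (z : ℝ) :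
    Tendsto (qPochhammer Q z) atTop (𝓝 (qPochhammerInf Q z)) :=
  (multipliable_one_sub_mul_pow hQ z).tendsto_prod_tprod_nat

lemma qPochhammerInf_eq_mul (hQ : |Q| < 1) (z : ℝ) (m : ℕ) :
    qPochhammerInf Q z = qPochhammer Q z m * qPochhammerInf Q (z * Q ^ m) := by
  refine tendsto_nhds_unique ((tendsto_qPochhammer hQ z).comp (tendsto_add_atTop_nat m)) ?_
  simpa only [Function.comp_def, add_comm _ m, qPochhammer_add] using
    (tendsto_qPochhammer hQ (z * Q ^ m)).const_mul (qPochhammer Q z m)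

lemma qPochhammerInf_ne_zero (hQ : |Q| < 1) (hz : |z| < 1) : qPochhammerInf Q z ≠ 0 := by
  refine (tprod_congr fun j => sub_eq_add_neg _ _).trans_ne
    (tprod_one_add_ne_zero_of_summable (fun j => ?_) (summable_norm_mul_pow hQ z))
  rw [← sub_eq_add_neg]
  have hlt : z * Q ^ j < 1 := lt_of_abs_lt (by simpa [mul_comm] using abs_pow_mul_lt_one hQ.le hz j)
  exact (sub_pos.2 hlt).ne'

lemma one_sub_mul_pow_mem_Ioc (hQ0 : 0 ≤ Q) (hQ1 : Q ≤ 1) (hz0 : 0 ≤ z) (hz1 : z < 1) (j : ℕ) :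
    1 - z * Q ^ j ∈ Set.Ioc 0 1 := by
  have hQj : Q ^ j ≤ 1 := pow_le_one₀ hQ0 hQ1
  constructor <;> nlinarith [pow_nonneg hQ0 j]

lemma qPochhammer_pos (hQ0 : 0 ≤ Q) (hQ1 : Q ≤ 1) (hz0 : 0 ≤ z) (hz1 : z < 1) (n : ℕ) :
    0 < qPochhammer Q z n :=
  prod_pos fun j _ => (one_sub_mul_pow_mem_Ioc hQ0 hQ1 hz0 hz1 j).1

lemma qPochhammer_antitone (hQ0 : 0 ≤ Q) (hQ1 : Q ≤ 1) (hz0 : 0 ≤ z) (hz1 : z < 1) :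
    Antitone (qPochhammer Q z) :=
  antitone_nat_of_succ_le fun n => by
    rw [qPochhammer_succ]
    exact mul_le_of_le_one_right (qPochhammer_pos hQ0 hQ1 hz0 hz1 n).le
      (one_sub_mul_pow_mem_Ioc hQ0 hQ1 hz0 hz1 n).2

lemma qPochhammerInf_le_qPochhammer (hQ0 : 0 ≤ Q) (hQ1 : Q < 1) (hz0 : 0 ≤ z) (hz1 : z < 1)
    (n : ℕ) : qPochhammerInf Q z ≤ qPochhammer Q z n :=
  (qPochhammer_antitone hQ0 hQ1.le hz0 hz1).le_of_tendsto
    (tendsto_qPochhammer (by rwa [abs_of_nonneg hQ0]) z) n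

lemma qPochhammerInf_pos (hQ0 : 0 ≤ Q) (hQ1 : Q < 1) (hz0 : 0 ≤ z) (hz1 : z < 1) :
    0 < qPochhammerInf Q z := by
  have hQ : |Q| < 1 := by rwa [abs_of_nonneg hQ0]
  refine lt_of_le_of_ne ?_ (qPochhammerInf_ne_zero hQ (by rwa [abs_of_nonneg hz0])).symm
  exact ge_of_tendsto' (tendsto_qPochhammer hQ z)
    fun n => (qPochhammer_pos hQ0 hQ1.le hz0 hz1 n).le

end QPochhammer

section PowerSeries

variable {b : ℕ → ℝ} {C Q z : ℝ}

lemma summable_mul_pow_of_abs_le (hb : ∀ n, |b n| ≤ C) (hz : |z| < 1) :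
    Summable fun n => b n * z ^ n :=
  .of_norm_bounded ((summable_geometric_of_lt_one (abs_nonneg z) hz).mul_left C) fun n => by
    rw [Real.norm_eq_abs, abs_mul, abs_pow]
    exact mul_le_mul_of_nonneg_right (hb n) (by positivity)

lemma tendsto_tsum_mul_pow_nhds_zero (hb : ∀ n, |b n| ≤ C) :
    Tendsto (fun z => ∑' n, b n * z ^ n) (𝓝 0) (𝓝 (b 0)) := by
  have hb0 : ∑' n, b n * (0 : ℝ) ^ n = b 0 := by
    rw [tsum_eq_single 0 fun n hn => by simp [hn]]
    simp
  rw [← hb0]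
  refine tendsto_tsum_of_dominated_convergence (summable_geometric_two.mul_left C)
    (fun n => ((continuous_pow n).tendsto 0).const_mul (b n)) ?_
  filter_upwards [Metric.closedBall_mem_nhds (0 : ℝ) one_half_pos] with z hz n
  rw [Metric.mem_closedBall, dist_zero_right, Real.norm_eq_abs] at hz
  rw [Real.norm_eq_abs, abs_mul, abs_pow]
  exact mul_le_mul (hb n) (pow_le_pow_left₀ (abs_nonneg z) hz n) (by positivity)
    ((abs_nonneg _).trans (hb n))

lemma tsum_mul_pow_sub_tsum_mul_mul_pow (hb : ∀ n, |b n| ≤ C) (hQ : |Q| ≤ 1) (hz : |z| < 1) :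
    ∑' n, b n * z ^ n - ∑' n, b n * (Q * z) ^ n =
      z * ∑' n, b (n + 1) * (1 - Q ^ (n + 1)) * z ^ n := by
  have hQz : |Q * z| < 1 := by simpa [mul_comm] using abs_pow_mul_lt_one hQ hz 1
  have hz' := summable_mul_pow_of_abs_le hb hz
  have hQz' := summable_mul_pow_of_abs_le hb hQz
  rw [← hz'.tsum_sub hQz', (hz'.sub hQz').tsum_eq_zero_add, ← tsum_mul_left]
  simp only [pow_zero, mul_one, sub_self, zero_add]
  exact tsum_congr fun n => by ring

end PowerSeries

section QDifference

variable {Q z : ℝ} {f : ℝ → ℝ}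

lemma tendsto_pow_mul_nhds_zero (hQ : |Q| < 1) (z : ℝ) :
    Tendsto (fun N : ℕ => Q ^ N * z) atTop (𝓝 0) := by
  simpa only [zero_mul] using (tendsto_pow_atTop_nhds_zero_of_abs_lt_one hQ).mul_const z

lemma eq_qPochhammerInf_of_eq_one_sub_mul (hQ : |Q| < 1) (hf0 : Tendsto f (𝓝 0) (𝓝 1))
    (hf : ∀ z, |z| < 1 → f z = (1 - z) * f (Q * z)) (hz : |z| < 1) :
    f z = qPochhammerInf Q z := by
  have iterate (N : ℕ) : f z = qPochhammer Q z N * f (Q ^ N * z) := by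
    induction N with
    | zero => simp [qPochhammer_zero]
    | succ N ih =>
      rw [ih, hf _ (abs_pow_mul_lt_one hQ.le hz N), qPochhammer_succ, pow_succ', mul_assoc Q]
      ring
  have hlim := (tendsto_qPochhammer hQ z).mul (hf0.comp (tendsto_pow_mul_nhds_zero hQ z))
  rw [mul_one] at hlim
  exact tendsto_nhds_unique (tendsto_const_nhds.congr iterate) hlim

lemma qPochhammerInf_mul_eq_one_of_eq_one_sub_mul (hQ : |Q| < 1) (hf0 : Tendsto f (𝓝 0) (𝓝 1))
    (hf : ∀ z, |z| < 1 → f (Q * z) = (1 - z) * f z) (hz : |z| < 1) :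
    qPochhammerInf Q z * f z = 1 := by
  have iterate (N : ℕ) : f (Q ^ N * z) = qPochhammer Q z N * f z := by
    induction N with
    | zero => simp [qPochhammer_zero]
    | succ N ih =>
      rw [pow_succ', mul_assoc Q, hf _ (abs_pow_mul_lt_one hQ.le hz N), ih, qPochhammer_succ]
      ring
  refine tendsto_nhds_unique ((tendsto_qPochhammer hQ z).mul_const (f z)) ?_
  exact (hf0.comp (tendsto_pow_mul_nhds_zero hQ z)).congr iterate

end QDifference

section Euler

variable {Q z : ℝ}

def eulerCoeff (Q : ℝ) (n : ℕ) : ℝ := (-1) ^ n * Q ^ n.choose 2 / qPochhammer Q Q n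

lemma one_sub_pow_succ_ne_zero (hQ0 : 0 ≤ Q) (hQ1 : Q < 1) (n : ℕ) : 1 - Q ^ (n + 1) ≠ 0 :=
  (sub_pos.2 (pow_lt_one₀ hQ0 hQ1 n.succ_ne_zero)).ne'

lemma eulerCoeff_succ_mul (hQ0 : 0 ≤ Q) (hQ1 : Q < 1) (n : ℕ) :
    eulerCoeff Q (n + 1) * (1 - Q ^ (n + 1)) = -(eulerCoeff Q n * Q ^ n) := by
  have hP := (qPochhammer_pos hQ0 hQ1.le hQ0 hQ1 n).ne'
  have hQn := one_sub_pow_succ_ne_zero hQ0 hQ1 n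
  rw [eulerCoeff, eulerCoeff, qPochhammer_self_succ, Nat.choose_succ_succ', Nat.choose_one_right]
  field_simp
  ring

lemma inv_qPochhammer_succ_mul (hQ0 : 0 ≤ Q) (hQ1 : Q < 1) (n : ℕ) :
    (qPochhammer Q Q (n + 1))⁻¹ * (1 - Q ^ (n + 1)) = (qPochhammer Q Q n)⁻¹ := by
  rw [qPochhammer_self_succ, mul_inv, mul_assoc,
    inv_mul_cancel₀ (one_sub_pow_succ_ne_zero hQ0 hQ1 n), mul_one]

lemma abs_inv_qPochhammer_le (hQ0 : 0 ≤ Q) (hQ1 : Q < 1) (n : ℕ) :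
    |(qPochhammer Q Q n)⁻¹| ≤ (qPochhammerInf Q Q)⁻¹ := by
  rw [abs_of_pos (inv_pos.2 (qPochhammer_pos hQ0 hQ1.le hQ0 hQ1 n))]
  exact inv_anti₀ (qPochhammerInf_pos hQ0 hQ1 hQ0 hQ1)
    (qPochhammerInf_le_qPochhammer hQ0 hQ1 hQ0 hQ1 n)

lemma abs_eulerCoeff_le (hQ0 : 0 ≤ Q) (hQ1 : Q < 1) (n : ℕ) :
    |eulerCoeff Q n| ≤ (qPochhammerInf Q Q)⁻¹ := by
  rw [eulerCoeff, div_eq_mul_inv, abs_mul, abs_mul, abs_pow, abs_neg, abs_one, one_pow, one_mul,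
    abs_of_nonneg (pow_nonneg hQ0 _)]
  exact (mul_le_of_le_one_left (abs_nonneg _) (pow_le_one₀ hQ0 hQ1.le)).trans
    (abs_inv_qPochhammer_le hQ0 hQ1 n)

theorem hasSum_eulerCoeff_mul_pow (hQ0 : 0 ≤ Q) (hQ1 : Q < 1) (hz : |z| < 1) :
    HasSum (fun n => eulerCoeff Q n * z ^ n) (qPochhammerInf Q z) := by
  have hb := abs_eulerCoeff_le hQ0 hQ1
  have hQ : |Q| < 1 := by rwa [abs_of_nonneg hQ0]
  convert (summable_mul_pow_of_abs_le hb hz).hasSum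
  refine (eq_qPochhammerInf_of_eq_one_sub_mul (f := fun w => ∑' n, eulerCoeff Q n * w ^ n)
    hQ ?_ (fun w hw => ?_) hz).symm
  · simpa [eulerCoeff, qPochhammer_zero] using tendsto_tsum_mul_pow_nhds_zero hb
  · have h := tsum_mul_pow_sub_tsum_mul_mul_pow hb hQ.le hw
    simp only [eulerCoeff_succ_mul hQ0 hQ1, neg_mul, tsum_neg, mul_assoc, ← mul_pow] at h
    linear_combination h

theorem hasSum_inv_qPochhammer_mul_pow (hQ0 : 0 ≤ Q) (hQ1 : Q < 1) (hz : |z| < 1) :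
    HasSum (fun n => (qPochhammer Q Q n)⁻¹ * z ^ n) (qPochhammerInf Q z)⁻¹ := by
  have hb := abs_inv_qPochhammer_le hQ0 hQ1
  have hQ : |Q| < 1 := by rwa [abs_of_nonneg hQ0]
  convert (summable_mul_pow_of_abs_le hb hz).hasSum
  refine (eq_inv_of_mul_eq_one_right
    (qPochhammerInf_mul_eq_one_of_eq_one_sub_mul
      (f := fun w => ∑' n, (qPochhammer Q Q n)⁻¹ * w ^ n) hQ ?_ (fun w hw => ?_) hz)).symm
  · simpa [qPochhammer_zero] using tendsto_tsum_mul_pow_nhds_zero hb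
  · have h := tsum_mul_pow_sub_tsum_mul_mul_pow hb hQ.le hw
    simp only [inv_qPochhammer_succ_mul hQ0 hQ1] at h
    linear_combination -h

theorem tsum_eulerCoeff_mul_pow_div (hQ0 : 0 ≤ Q) (hQ1 : Q < 1) {x : ℝ} (hx : |x| < 1) :
    ∑' n, eulerCoeff Q n * Q ^ n / (1 - x * Q ^ n) = qPochhammerInf Q Q / qPochhammerInf Q x := by
  have hQ : |Q| < 1 := by rwa [abs_of_nonneg hQ0]
  set F : ℕ → ℕ → ℝ := fun n m => x ^ m * (eulerCoeff Q n * (Q ^ (m + 1)) ^ n)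
  have hF : Summable (Function.uncurry F) := by
    refine .of_norm_bounded (((summable_geometric_of_lt_one hQ0 hQ1).mul_of_nonneg
      (summable_geometric_of_lt_one (abs_nonneg x) hx) (fun n => pow_nonneg hQ0 n)
      (fun m => by positivity)).mul_left (qPochhammerInf Q Q)⁻¹) ?_
    rintro ⟨n, m⟩
    have hpow : (Q ^ (m + 1)) ^ n ≤ Q ^ n := by
      rw [← pow_mul]
      exact pow_le_pow_of_le_one hQ0 hQ1.le (by nlinarith)
    simp only [Function.uncurry_apply_pair, F, Real.norm_eq_abs, abs_mul, abs_pow,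
      abs_of_nonneg hQ0]
    calc |x| ^ m * (|eulerCoeff Q n| * (Q ^ (m + 1)) ^ n)
        ≤ |x| ^ m * ((qPochhammerInf Q Q)⁻¹ * Q ^ n) := by
          have hC := inv_pos.2 (qPochhammerInf_pos hQ0 hQ1 hQ0 hQ1)
          gcongr
          exact abs_eulerCoeff_le hQ0 hQ1 n
      _ = (qPochhammerInf Q Q)⁻¹ * (Q ^ n * |x| ^ m) := by ring
  have hrow (n : ℕ) : ∑' m, F n m = eulerCoeff Q n * Q ^ n / (1 - x * Q ^ n) := by
    have hxQ : |x * Q ^ n| < 1 := by simpa [mul_comm] using abs_pow_mul_lt_one hQ.le hx n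
    rw [div_eq_mul_inv, ← tsum_geometric_of_abs_lt_one hxQ, ← tsum_mul_left]
    exact tsum_congr fun m => by ring
  have hcol (m : ℕ) : ∑' n, F n m = qPochhammerInf Q Q * ((qPochhammer Q Q m)⁻¹ * x ^ m) := by
    have hQm : |Q ^ (m + 1)| < 1 := by
      rw [abs_of_nonneg (pow_nonneg hQ0 _)]
      exact pow_lt_one₀ hQ0 hQ1 m.succ_ne_zero
    have hP := (qPochhammer_pos hQ0 hQ1.le hQ0 hQ1 m).ne'
    rw [tsum_mul_left, (hasSum_eulerCoeff_mul_pow hQ0 hQ1 hQm).tsum_eq,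
      qPochhammerInf_eq_mul hQ Q m, ← pow_succ']
    field_simp
  calc ∑' n, eulerCoeff Q n * Q ^ n / (1 - x * Q ^ n) = ∑' n, ∑' m, F n m :=
        (tsum_congr hrow).symm
    _ = ∑' m, ∑' n, F n m := hF.tsum_comm.symm
    _ = qPochhammerInf Q Q / qPochhammerInf Q x := by
        rw [tsum_congr hcol, tsum_mul_left, (hasSum_inv_qPochhammer_mul_pow hQ0 hQ1 hx).tsum_eq,
          div_eq_mul_inv]

lemma sub_one_pow_mul_qFact (hQ : Q ≠ 1) (n : ℕ) :
    (Q - 1) ^ n * qFact Q n = (-1) ^ n * qPochhammer Q Q n := by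
  induction n with
  | zero => simp [qFact, qPochhammer_zero]
  | succ n ih =>
    have hsucc : qFact Q (n + 1) = qFact Q n * ((1 - Q ^ (n + 1)) / (1 - Q)) := prod_range_succ _ _
    have h1Q : 1 - Q ≠ 0 := sub_ne_zero.2 hQ.symm
    rw [hsucc, qPochhammer_self_succ]
    field_simp
    linear_combination (-(1 - Q) * (1 - Q ^ (n + 1))) * ih

lemma pow_choose_div_eq_eulerCoeff (hQ : Q ≠ 1) (x : ℝ) (n : ℕ) :
    Q ^ (n + 1).choose 2 / ((1 - x * Q ^ n) * (Q - 1) ^ n * qFact Q n) =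
      eulerCoeff Q n * Q ^ n / (1 - x * Q ^ n) := by
  rw [mul_assoc, sub_one_pow_mul_qFact hQ, eulerCoeff, Nat.choose_succ_succ',
    Nat.choose_one_right, pow_add]
  have hsign : ((-1 : ℝ) ^ n)⁻¹ = (-1) ^ n := by rw [← inv_pow, inv_neg_one]
  simp only [div_eq_mul_inv, mul_inv, hsign]
  ring

theorem tsum_pow_choose_div_qFact (hQ0 : 0 ≤ Q) (hQ1 : Q < 1) {x : ℝ} (hx : |x| < 1) :
    ∑' n : ℕ, Q ^ (n + 1).choose 2 / ((1 - x * Q ^ n) * (Q - 1) ^ n * qFact Q n) =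
      qPochhammerInf Q Q / qPochhammerInf Q x := by
  simp only [pow_choose_div_eq_eulerCoeff hQ1.ne]
  exact tsum_eulerCoeff_mul_pow_div hQ0 hQ1 hx

end Euler

lemma mul_mul_succ_div_two (k n : ℕ) : k * n * (n + 1) / 2 = k * (n + 1).choose 2 := by
  have h2 : 2 ∣ (n + 1) * n := by simpa [mul_comm] using (Nat.even_mul_succ_self n).two_dvd
  rw [Nat.choose_two_right, Nat.add_sub_cancel, ← Nat.mul_div_assoc k h2]
  congr 1
  ring

end

theorem qkGamma_series (q : ℝ) (hq0 : 0 < q) (hq1 : q < 1)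
    (k : ℕ) (hk : 0 < k) (t : ℝ) (ht : 0 < t) :
    qkGamma q k t = (1 - q) ^ (1 - t / (k : ℝ)) *
      ∑' n : ℕ, q ^ (k * n * (n + 1) / 2) /
        ((1 - q ^ ((k : ℝ) * (n : ℝ) + t)) * (q ^ k - 1) ^ n * qFact (q ^ k) n) := by
  set Q : ℝ := q ^ k
  set x : ℝ := q ^ t
  have hQ0 : 0 ≤ Q := by positivity
  have hQ1 : Q < 1 := pow_lt_one₀ hq0.le hq1 hk.ne'
  have hQ : |Q| < 1 := by rwa [abs_of_nonneg hQ0]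
  have hx : |x| < 1 := by
    rw [abs_of_pos (Real.rpow_pos_of_pos hq0 t)]
    exact Real.rpow_lt_one hq0.le hq1 ht
  have hpow (n : ℕ) : q ^ ((k : ℝ) * n) = Q ^ n := by
    rw [Real.rpow_natCast_mul hq0.le, Real.rpow_natCast]
  have hprod : ∏' j : ℕ, (1 - q ^ ((k : ℝ) * ((j : ℝ) + 1))) / (1 - q ^ (t + (j : ℝ) * (k : ℝ))) =
      qPochhammerInf Q Q / qPochhammerInf Q x := by
    rw [qPochhammerInf, qPochhammerInf, ← (multipliable_one_sub_mul_pow hQ Q).tprod_div₀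
      (multipliable_one_sub_mul_pow hQ x) (qPochhammerInf_ne_zero hQ hx)]
    refine tprod_congr fun j => ?_
    rw [← Nat.cast_succ, hpow, Real.rpow_add hq0, mul_comm (j : ℝ), hpow, pow_succ']
  have hterm (n : ℕ) : q ^ (k * n * (n + 1) / 2) = Q ^ (n + 1).choose 2 := by
    rw [mul_mul_succ_div_two, pow_mul]
  have hden (n : ℕ) : q ^ ((k : ℝ) * (n : ℝ) + t) = x * Q ^ n := by
    rw [Real.rpow_add hq0, hpow, mul_comm]
  rw [qkGamma, hprod]
  simp only [hterm, hden]
  rw [tsum_pow_choose_div_qFact hQ0 hQ1 hx]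
end

section
/- For every real number 0 < q < 1, every positive integer k, every real t > 0, and every natural number n, one has [t]_{n,k} = (1/Γ_{q,k}(t)) · ∫_0^b x^{t+nk-1} E_{q^k}^{-q^k x^k/[k]_q} d_q x, where b = [k]_q^{1/k}/(1-q^k)^{1/k} and the Jackson q-integral means (1-q) b ∑_{m=0}^∞ q^m (q^m b)^{t+nk-1} E_{q^k}^{-q^k (q^m b)^k/[k]_q}. -/
/-- The q-number [t]_q = (1-q^t)/(1-q). -/
noncomputable def qNum (q t : ℝ) : ℝ := (1 - q ^ t) / (1 - q)

/-- The q-analogue of the Pochhammer k-symbol [t]_{n,k} = ∏_{j=0}^{n-1} [t+jk]_q. -/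
noncomputable def qkPochhammer (q : ℝ) (k : ℕ) (t : ℝ) (n : ℕ) : ℝ :=
  ∏ j ∈ Finset.range n, qNum q (t + (j : ℝ) * (k : ℝ))

/-- The Q-exponential E_Q^x = ∑_{n=0}^∞ Q^{n(n-1)/2} x^n/[n]_Q!. -/
noncomputable def qExp (Q x : ℝ) : ℝ :=
  ∑' n : ℕ, Q ^ (n * (n - 1) / 2) * x ^ n / qFact Q n

/-!
Write `Q = q^k` and `s = t + nk`. At the nodes `q^m b` the argument of the q-exponential is
`-Q^(m+1)/(1-Q)`, and Euler's product formula `E_Q^(-a/(1-Q)) = (a; Q)_∞` turns the `m`-th term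
of the Jackson sum into `b^(s-1) (Q; Q)_∞ (q^s)^m / (Q; Q)_m`. Euler's other identity `∑ x^m / (Q; Q)_m = 1 / (x; Q)_∞` sums
this to `Γ_{q,k}(s)`, and the functional equation `Γ_{q,k}(t + nk) = [t]_{n,k} Γ_{q,k}(t)` finishes.
Each Euler identity comes from a first-order q-difference equation iterated `N` times, followed by
dominated convergence as `N → ∞`.
-/

open Finset Filter Topology

/-- The q-Pochhammer symbol `(a; Q)_n`. -/
noncomputable def qPoch (Q a : ℝ) (n : ℕ) : ℝ := ∏ j ∈ range n, (1 - a * Q ^ j)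

/-- The infinite q-Pochhammer symbol `(a; Q)_∞`. -/
noncomputable def qPochInf (Q a : ℝ) : ℝ := ∏' j : ℕ, (1 - a * Q ^ j)

/-- For `c = 1` and `c n = Q^(n(n-1)/2)` these are Euler's two q-exponential series. -/
noncomputable def qSeries (c : ℕ → ℝ) (Q x : ℝ) : ℝ := ∑' n : ℕ, c n * x ^ n / qPoch Q Q n

section qPochhammer

variable {Q : ℝ}

theorem abs_mul_pow_lt_one {x : ℝ} (hQ0 : 0 ≤ Q) (hQ1 : Q ≤ 1) (hx : |x| < 1) (n : ℕ) :
    |x * Q ^ n| < 1 := by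
  rw [abs_mul, abs_of_nonneg (pow_nonneg hQ0 n)]
  exact mul_lt_one_of_nonneg_of_lt_one_left (abs_nonneg x) hx (pow_le_one₀ hQ0 hQ1)

theorem one_sub_mul_pow_pos {a : ℝ} (hQ0 : 0 ≤ Q) (hQ1 : Q ≤ 1) (ha : a < 1) (j : ℕ) :
    0 < 1 - a * Q ^ j := by
  rcases le_or_gt a 0 with h | h
  · nlinarith [pow_nonneg hQ0 j]
  · nlinarith [pow_le_one₀ hQ0 hQ1 (n := j)]

theorem qPoch_succ (a : ℝ) (n : ℕ) : qPoch Q a (n + 1) = qPoch Q a n * (1 - a * Q ^ n) :=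
  prod_range_succ _ n

theorem qPoch_pos {a : ℝ} (hQ0 : 0 ≤ Q) (hQ1 : Q ≤ 1) (ha : a < 1) (n : ℕ) : 0 < qPoch Q a n :=
  prod_pos fun j _ => one_sub_mul_pow_pos hQ0 hQ1 ha j

theorem summable_neg_mul_pow (hQ : |Q| < 1) (a : ℝ) : Summable fun j : ℕ => -(a * Q ^ j) :=
  ((summable_geometric_of_abs_lt_one hQ).mul_left a).neg

theorem hasProd_qPochInf (hQ : |Q| < 1) (a : ℝ) :
    HasProd (fun j : ℕ => 1 - a * Q ^ j) (qPochInf Q a) := by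
  unfold qPochInf
  simpa only [sub_eq_add_neg] using
    (Real.multipliable_one_add_of_summable (summable_neg_mul_pow hQ a)).hasProd

theorem tendsto_qPoch_qPochInf (hQ : |Q| < 1) (a : ℝ) :
    Tendsto (qPoch Q a) atTop (𝓝 (qPochInf Q a)) :=
  (hasProd_qPochInf hQ a).tendsto_prod_nat

theorem qPochInf_pos {a : ℝ} (hQ0 : 0 ≤ Q) (hQ1 : Q < 1) (ha : a < 1) : 0 < qPochInf Q a := by
  have hlog : Summable fun j : ℕ => Real.log (1 - a * Q ^ j) := by
    simpa only [sub_eq_add_neg] using Real.summable_log_one_add_of_summable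
      (summable_neg_mul_pow (abs_lt.2 ⟨by linarith, hQ1⟩) a)
  rw [qPochInf, ← Real.rexp_tsum_eq_tprod (one_sub_mul_pow_pos hQ0 hQ1.le ha) hlog]
  exact Real.exp_pos _

theorem qPochInf_eq_qPoch_mul (hQ : |Q| < 1) (a : ℝ) (n : ℕ) :
    qPochInf Q a = qPoch Q a n * qPochInf Q (a * Q ^ n) := by
  have hshift : Multipliable fun j => 1 - a * Q ^ (j + n) :=
    (hasProd_qPochInf hQ (a * Q ^ n)).multipliable.congr fun j => by ring
  rw [qPochInf, ← Multipliable.prod_mul_tprod_nat_mul' (f := fun j => 1 - a * Q ^ j) hshift]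
  exact congrArg _ (tprod_congr fun j => by ring)

theorem qPochInf_le_one {a : ℝ} (hQ0 : 0 ≤ Q) (hQ1 : Q < 1) (ha0 : 0 ≤ a) (ha1 : a < 1) :
    qPochInf Q a ≤ 1 :=
  le_of_tendsto' (tendsto_qPoch_qPochInf (abs_lt.2 ⟨by linarith, hQ1⟩) a) fun _ =>
    prod_le_one (fun j _ => (one_sub_mul_pow_pos hQ0 hQ1.le ha1 j).le)
      fun j _ => sub_le_self _ (by positivity)

theorem qPochInf_le_qPoch {a : ℝ} (hQ0 : 0 ≤ Q) (hQ1 : Q < 1) (ha0 : 0 ≤ a) (ha1 : a < 1) (n : ℕ) :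
    qPochInf Q a ≤ qPoch Q a n := by
  have htail : qPochInf Q (a * Q ^ n) ≤ 1 :=
    qPochInf_le_one hQ0 hQ1 (by positivity)
      ((mul_le_of_le_one_right ha0 (pow_le_one₀ hQ0 hQ1.le)).trans_lt ha1)
  rw [qPochInf_eq_qPoch_mul (abs_lt.2 ⟨by linarith, hQ1⟩) a n]
  exact mul_le_of_le_one_right (qPoch_pos hQ0 hQ1.le ha1 n).le htail

end qPochhammer

section qSeries

variable {c : ℕ → ℝ} {Q a x : ℝ}

theorem norm_qSeries_term_le (hc : ∀ n, |c n| ≤ 1) (hQ0 : 0 ≤ Q) (hQ1 : Q < 1) (n : ℕ) :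
    ‖c n * x ^ n / qPoch Q Q n‖ ≤ |x| ^ n / qPochInf Q Q := by
  rw [Real.norm_eq_abs, abs_div, abs_mul, abs_pow, abs_of_pos (qPoch_pos hQ0 hQ1.le hQ1 n)]
  calc |c n| * |x| ^ n / qPoch Q Q n ≤ 1 * |x| ^ n / qPochInf Q Q := by
        gcongr
        exacts [qPochInf_pos hQ0 hQ1 hQ1, hc n, qPochInf_le_qPoch hQ0 hQ1 hQ0 hQ1 n]
    _ = |x| ^ n / qPochInf Q Q := by rw [one_mul]

theorem summable_qSeries (hc : ∀ n, |c n| ≤ 1) (hQ0 : 0 ≤ Q) (hQ1 : Q < 1) (hx : |x| < 1) :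
    Summable fun n => c n * x ^ n / qPoch Q Q n :=
  ((summable_geometric_of_lt_one (abs_nonneg x) hx).div_const _).of_norm_bounded
    (norm_qSeries_term_le hc hQ0 hQ1)

theorem tendsto_qSeries_mul_pow (hc : ∀ n, |c n| ≤ 1) (hQ0 : 0 ≤ Q) (hQ1 : Q < 1) (hx : |x| < 1) :
    Tendsto (fun N : ℕ => qSeries c Q (x * Q ^ N)) atTop (𝓝 (c 0)) := by
  have hnode : Tendsto (fun N : ℕ => x * Q ^ N) atTop (𝓝 0) := by
    simpa using (tendsto_pow_atTop_nhds_zero_of_lt_one hQ0 hQ1).const_mul x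
  have hbound : ∀ N n, ‖c n * (x * Q ^ N) ^ n / qPoch Q Q n‖ ≤ |x| ^ n / qPochInf Q Q :=
    fun N n => (norm_qSeries_term_le hc hQ0 hQ1 n).trans <| by
      have habs : |x * Q ^ N| ≤ |x| := by
        rw [abs_mul, abs_of_nonneg (pow_nonneg hQ0 N)]
        exact mul_le_of_le_one_right (abs_nonneg x) (pow_le_one₀ hQ0 hQ1.le)
      have := qPochInf_pos hQ0 hQ1 hQ1
      gcongr
  have h := tendsto_tsum_of_dominated_convergence
    ((summable_geometric_of_lt_one (abs_nonneg x) hx).div_const _)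
    (fun n => ((hnode.pow n).const_mul (c n)).div_const (qPoch Q Q n))
    (Eventually.of_forall hbound)
  rwa [tsum_eq_single 0 fun n hn => by simp [zero_pow hn], pow_zero, mul_one, qPoch,
    range_zero, prod_empty, div_one] at h

theorem qSeries_sub_qSeries_mul {μ : ℝ} (hc : ∀ n, c (n + 1) = μ ^ n * c n)
    (hcb : ∀ n, |c n| ≤ 1) (hQ0 : 0 ≤ Q) (hQ1 : Q < 1) (hx : |x| < 1) :
    qSeries c Q x - qSeries c Q (x * Q) = x * qSeries c Q (x * μ) := by
  have hsx := summable_qSeries hcb hQ0 hQ1 hx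
  have hsxQ := summable_qSeries hcb hQ0 hQ1
    (by simpa only [pow_one] using abs_mul_pow_lt_one hQ0 hQ1.le hx 1)
  have hterm : ∀ n, c (n + 1) * x ^ (n + 1) / qPoch Q Q (n + 1)
      - c (n + 1) * (x * Q) ^ (n + 1) / qPoch Q Q (n + 1)
        = x * (c n * (x * μ) ^ n / qPoch Q Q n) := by
    intro n
    have h₁ := (qPoch_pos hQ0 hQ1.le hQ1 n).ne'
    have h₂ := (one_sub_mul_pow_pos hQ0 hQ1.le hQ1 n).ne'
    rw [qPoch_succ, hc]
    field_simp
    ring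
  rw [qSeries, qSeries, qSeries, ← hsx.tsum_sub hsxQ, (hsx.sub hsxQ).tsum_eq_zero_add,
    ← tsum_mul_left]
  simp only [hterm, pow_zero, sub_self, zero_add]

theorem qSeries_one_mul_one_sub (hQ0 : 0 ≤ Q) (hQ1 : Q < 1) (hx : |x| < 1) :
    qSeries 1 Q x * (1 - x) = qSeries 1 Q (x * Q) := by
  have h := qSeries_sub_qSeries_mul (c := 1) (μ := 1) (fun n => by simp) (fun n => by simp)
    hQ0 hQ1 hx
  rw [mul_one] at h
  linarith

theorem qSeries_triangle_eq_one_add_mul (hQ0 : 0 ≤ Q) (hQ1 : Q < 1) (hx : |x| < 1) :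
    qSeries (fun n => Q ^ (n * (n - 1) / 2)) Q x
      = (1 + x) * qSeries (fun n => Q ^ (n * (n - 1) / 2)) Q (x * Q) := by
  have h := qSeries_sub_qSeries_mul (c := fun n => Q ^ (n * (n - 1) / 2)) (μ := Q)
    (fun n => by rw [Nat.triangle_succ, pow_add, mul_comm])
    (fun n => by rw [abs_of_nonneg (by positivity)]; exact pow_le_one₀ hQ0 hQ1.le)
    hQ0 hQ1 hx
  linarith

theorem qSeries_one_mul_qPochInf (hQ0 : 0 ≤ Q) (hQ1 : Q < 1) (hx : |x| < 1) :
    qSeries 1 Q x * qPochInf Q x = 1 := by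
  have hpartial : ∀ N : ℕ, qSeries 1 Q x * qPoch Q x N = qSeries 1 Q (x * Q ^ N) := by
    intro N
    induction N with
    | zero => simp [qPoch]
    | succ N ih =>
      rw [qPoch_succ, ← mul_assoc, ih, qSeries_one_mul_one_sub hQ0 hQ1
        (abs_mul_pow_lt_one hQ0 hQ1.le hx N), pow_succ, mul_assoc]
  refine tendsto_nhds_unique
    ((tendsto_qPoch_qPochInf (abs_lt.2 ⟨by linarith, hQ1⟩) x).const_mul _) ?_
  simpa only [hpartial, Pi.one_apply] using
    tendsto_qSeries_mul_pow (c := 1) (fun n => by simp) hQ0 hQ1 hx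

theorem qSeries_triangle_neg_eq_qPochInf (hQ0 : 0 ≤ Q) (hQ1 : Q < 1) (ha : |a| < 1) :
    qSeries (fun n => Q ^ (n * (n - 1) / 2)) Q (-a) = qPochInf Q a := by
  have hpartial : ∀ N : ℕ, qSeries (fun n => Q ^ (n * (n - 1) / 2)) Q (-a)
      = qPoch Q a N * qSeries (fun n => Q ^ (n * (n - 1) / 2)) Q (-a * Q ^ N) := by
    intro N
    induction N with
    | zero => simp [qPoch]
    | succ N ih =>
      rw [ih, qSeries_triangle_eq_one_add_mul hQ0 hQ1
        (abs_mul_pow_lt_one hQ0 hQ1.le (by rwa [abs_neg]) N), qPoch_succ, pow_succ]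
      ring_nf
  have hlim := (tendsto_qPoch_qPochInf (abs_lt.2 ⟨by linarith, hQ1⟩) a).mul
    (tendsto_qSeries_mul_pow (c := fun n => Q ^ (n * (n - 1) / 2))
      (fun n => by rw [abs_of_nonneg (by positivity)]; exact pow_le_one₀ hQ0 hQ1.le)
      hQ0 hQ1 (x := -a) (by rwa [abs_neg]))
  rw [pow_zero, mul_one] at hlim
  exact tendsto_nhds_unique (tendsto_const_nhds.congr hpartial) hlim

end qSeries

theorem qFact_eq_qPoch_div (Q : ℝ) (n : ℕ) : qFact Q n = qPoch Q Q n / (1 - Q) ^ n := by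
  rw [qFact, prod_div_distrib, prod_const, card_range, qPoch]
  exact congrArg (· / _) (prod_congr rfl fun j _ => by ring)

theorem qExp_eq_qSeries (Q x : ℝ) :
    qExp Q x = qSeries (fun n => Q ^ (n * (n - 1) / 2)) Q ((1 - Q) * x) :=
  tsum_congr fun n => by rw [qFact_eq_qPoch_div, mul_pow, div_div_eq_mul_div]; ring

section qExp

variable {Q a : ℝ}

theorem qExp_neg_div_one_sub (hQ0 : 0 ≤ Q) (hQ1 : Q < 1) (ha : |a| < 1) :
    qExp Q (-(a / (1 - Q))) = qPochInf Q a := by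
  rw [qExp_eq_qSeries, mul_neg, mul_div_cancel₀ _ (sub_ne_zero.2 hQ1.ne')]
  exact qSeries_triangle_neg_eq_qPochInf hQ0 hQ1 ha

theorem qExp_neg_pow_succ_div (hQ0 : 0 ≤ Q) (hQ1 : Q < 1) (m : ℕ) :
    qExp Q (-(Q ^ (m + 1) / (1 - Q))) = qPochInf Q Q / qPoch Q Q m := by
  have hQ : |Q| < 1 := abs_lt.2 ⟨by linarith, hQ1⟩
  have ha : |Q ^ (m + 1)| < 1 := by
    rw [abs_of_nonneg (by positivity)]
    exact pow_lt_one₀ hQ0 hQ1 m.succ_ne_zero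
  rw [qExp_neg_div_one_sub hQ0 hQ1 ha, qPochInf_eq_qPoch_mul hQ Q m, pow_succ',
    mul_div_cancel_left₀ _ (qPoch_pos hQ0 hQ1.le hQ1 m).ne']

end qExp

theorem rpow_natCast_mul_natCast (q : ℝ) (j k : ℕ) : q ^ ((j : ℝ) * (k : ℝ)) = (q ^ k) ^ j := by
  rw [← Nat.cast_mul, Real.rpow_natCast, mul_comm, pow_mul]

theorem qNum_natCast (q : ℝ) (k : ℕ) : qNum q k = (1 - q ^ k) / (1 - q) := by
  rw [qNum, Real.rpow_natCast]

section qkGamma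

variable {q : ℝ} {k : ℕ}

theorem qkPochhammer_eq_qPoch_div (hq0 : 0 < q) (t : ℝ) (n : ℕ) :
    qkPochhammer q k t n = qPoch (q ^ k) (q ^ t) n / (1 - q) ^ n := by
  simp only [qkPochhammer, qNum, Real.rpow_add hq0, rpow_natCast_mul_natCast]
  rw [prod_div_distrib, prod_const, card_range, qPoch]

theorem qkGamma_eq_qPochInf_div (hq0 : 0 < q) (hq1 : q < 1) (hk : 0 < k) {u : ℝ} (hu : 0 < u) :
    qkGamma q k u
      = (1 - q) ^ (1 - u / k) * (qPochInf (q ^ k) (q ^ k) / qPochInf (q ^ k) (q ^ u)) := by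
  have hQ0 : 0 ≤ q ^ k := by positivity
  have hQ1 : q ^ k < 1 := pow_lt_one₀ hq0.le hq1 hk.ne'
  have hQ : |q ^ k| < 1 := abs_lt.2 ⟨by linarith, hQ1⟩
  have hterm : ∀ j : ℕ, (1 - q ^ ((k : ℝ) * ((j : ℝ) + 1))) / (1 - q ^ (u + (j : ℝ) * (k : ℝ)))
      = (1 - q ^ k * (q ^ k) ^ j) / (1 - q ^ u * (q ^ k) ^ j) := fun j => by
    rw [Real.rpow_add hq0, rpow_natCast_mul_natCast,
      show (k : ℝ) * ((j : ℝ) + 1) = ((j + 1 : ℕ) : ℝ) * (k : ℝ) by push_cast; ring,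
      rpow_natCast_mul_natCast, pow_succ']
  rw [qkGamma, tprod_congr hterm, (hasProd_qPochInf hQ _).multipliable.tprod_div₀
    (hasProd_qPochInf hQ _).multipliable
    (qPochInf_pos hQ0 hQ1 (Real.rpow_lt_one hq0.le hq1 hu)).ne']
  rfl

theorem qkGamma_pos (hq0 : 0 < q) (hq1 : q < 1) (hk : 0 < k) {u : ℝ} (hu : 0 < u) :
    0 < qkGamma q k u := by
  have hQ0 : 0 ≤ q ^ k := by positivity
  have hQ1 : q ^ k < 1 := pow_lt_one₀ hq0.le hq1 hk.ne'
  rw [qkGamma_eq_qPochInf_div hq0 hq1 hk hu]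
  have := qPochInf_pos hQ0 hQ1 hQ1
  have := qPochInf_pos hQ0 hQ1 (Real.rpow_lt_one hq0.le hq1 hu)
  have : 0 < 1 - q := by linarith
  positivity

theorem qkGamma_add_nat_mul (hq0 : 0 < q) (hq1 : q < 1) (hk : 0 < k) {t : ℝ} (ht : 0 < t)
    (n : ℕ) : qkGamma q k (t + n * k) = qkPochhammer q k t n * qkGamma q k t := by
  have hQ1 : q ^ k < 1 := pow_lt_one₀ hq0.le hq1 hk.ne'
  have hQ : |q ^ k| < 1 := abs_lt.2 ⟨by linarith [pow_pos hq0 k], hQ1⟩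
  have hk' : (k : ℝ) ≠ 0 := by positivity
  have hexp : (1 - q) ^ (1 - t / k) = (1 - q) ^ (1 - (t + n * k) / k) * (1 - q) ^ n := by
    rw [← Real.rpow_natCast, ← Real.rpow_add (by linarith)]
    congr 1
    field_simp
    ring
  rw [qkGamma_eq_qPochInf_div hq0 hq1 hk (by positivity), qkGamma_eq_qPochInf_div hq0 hq1 hk ht,
    qkPochhammer_eq_qPoch_div hq0, qPochInf_eq_qPoch_mul hQ (q ^ t) n, hexp,
    Real.rpow_add hq0, rpow_natCast_mul_natCast]
  have := (pow_pos (sub_pos.2 hq1) n).ne'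
  have := (qPoch_pos (pow_nonneg hq0.le k) hQ1.le (Real.rpow_lt_one hq0.le hq1 ht) n).ne'
  field_simp

end qkGamma

noncomputable def jacksonIntegral (q b : ℝ) (f : ℝ → ℝ) : ℝ :=
  (1 - q) * b * ∑' m : ℕ, q ^ m * f (q ^ m * b)

section jackson

variable {q : ℝ} {k : ℕ}

theorem qNum_rpow_div (hq0 : 0 < q) (hq1 : q < 1) (hk : 0 < k) :
    qNum q k ^ ((1 : ℝ) / k) / (1 - q ^ k) ^ ((1 : ℝ) / k) = (1 - q) ^ (-((1 : ℝ) / k)) := by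
  have h1q : 0 < 1 - q := by linarith
  have h1Q : 0 < 1 - q ^ k := by linarith [pow_lt_one₀ hq0.le hq1 hk.ne']
  rw [qNum_natCast, Real.div_rpow h1Q.le h1q.le, Real.rpow_neg h1q.le]
  have := (Real.rpow_pos_of_pos h1Q ((1 : ℝ) / k)).ne'
  field_simp

theorem jacksonIntegral_rpow_mul_qExp (hq0 : 0 < q) (hq1 : q < 1) (hk : 0 < k) {s : ℝ}
    (hs : 0 < s) :
    jacksonIntegral q ((1 - q) ^ (-((1 : ℝ) / k)))
      (fun x => x ^ (s - 1) * qExp (q ^ k) (-(q ^ k * x ^ k / qNum q k))) = qkGamma q k s := by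
  set b := (1 - q) ^ (-((1 : ℝ) / k)) with hb
  have h1q : 0 < 1 - q := by linarith
  have hQ0 : 0 ≤ q ^ k := by positivity
  have hQ1 : q ^ k < 1 := pow_lt_one₀ hq0.le hq1 hk.ne'
  have hk' : (k : ℝ) ≠ 0 := by positivity
  have hb0 : 0 < b := Real.rpow_pos_of_pos h1q _
  have hbk : b ^ k = (1 - q)⁻¹ := by
    rw [hb, ← Real.rpow_natCast, ← Real.rpow_mul h1q.le, neg_mul, one_div_mul_cancel hk',
      Real.rpow_neg_one]
  have hscale : (1 - q) * b * b ^ (s - 1) = (1 - q) ^ (1 - s / k) := by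
    rw [mul_assoc, ← Real.rpow_one_add' hb0.le (by linarith), add_sub_cancel, hb,
      ← Real.rpow_mul h1q.le, show 1 - s / k = 1 + -(1 / k) * s by ring, Real.rpow_add h1q,
      Real.rpow_one]
  have hnode : ∀ m : ℕ, q ^ m * (q ^ m * b) ^ (s - 1) = (q ^ s) ^ m * b ^ (s - 1) := fun m => by
    rw [Real.mul_rpow (by positivity) hb0.le, ← mul_assoc, ← Real.rpow_one_add' (by positivity)
      (by linarith), add_sub_cancel, ← Real.rpow_pow_comm hq0.le]
  have harg : ∀ m : ℕ, q ^ k * (q ^ m * b) ^ k / qNum q k = (q ^ k) ^ (m + 1) / (1 - q ^ k) :=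
    fun m => by
      rw [mul_pow, hbk, qNum_natCast, ← pow_mul, mul_comm m k, pow_mul, pow_succ']
      field_simp
  have hterm : ∀ m : ℕ, q ^ m * ((q ^ m * b) ^ (s - 1) *
      qExp (q ^ k) (-(q ^ k * (q ^ m * b) ^ k / qNum q k)))
        = b ^ (s - 1) * qPochInf (q ^ k) (q ^ k) * (1 * (q ^ s) ^ m / qPoch (q ^ k) (q ^ k) m) :=
    fun m => by
      rw [← mul_assoc, hnode, harg, qExp_neg_pow_succ_div hQ0 hQ1]
      ring
  have hF : ∑' m : ℕ, 1 * (q ^ s) ^ m / qPoch (q ^ k) (q ^ k) m = (qPochInf (q ^ k) (q ^ s))⁻¹ :=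
    eq_inv_of_mul_eq_one_left (qSeries_one_mul_qPochInf hQ0 hQ1
      (by rw [abs_of_pos (by positivity)]; exact Real.rpow_lt_one hq0.le hq1 hs))
  rw [jacksonIntegral, tsum_congr hterm, tsum_mul_left, hF, qkGamma_eq_qPochInf_div hq0 hq1 hk hs,
    ← hscale]
  ring

end jackson

theorem qkPochhammer_as_moment (q : ℝ) (hq0 : 0 < q) (hq1 : q < 1)
    (k : ℕ) (hk : 0 < k) (t : ℝ) (ht : 0 < t) (n : ℕ)
    (b : ℝ) (hb : b = qNum q (k : ℝ) ^ ((1 : ℝ) / (k : ℝ)) / (1 - q ^ k) ^ ((1 : ℝ) / (k : ℝ))) :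
    qkPochhammer q k t n = (1 / qkGamma q k t) *
      ((1 - q) * b * ∑' m : ℕ, q ^ m * (q ^ m * b) ^ (t + (n : ℝ) * (k : ℝ) - 1) *
        qExp (q ^ k) (-(q ^ k * (q ^ m * b) ^ k / qNum q (k : ℝ)))) := by
  rw [hb, qNum_rpow_div hq0 hq1 hk]
  simp_rw [mul_assoc _ _ (qExp _ _)]
  change _ = _ * jacksonIntegral q _
    (fun x => x ^ (t + n * k - 1) * qExp (q ^ k) (-(q ^ k * x ^ k / qNum q k)))
  rw [jacksonIntegral_rpow_mul_qExp hq0 hq1 hk (by positivity), qkGamma_add_nat_mul hq0 hq1 hk ht,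
    one_div, inv_mul_eq_div, mul_div_cancel_right₀ _ (qkGamma_pos hq0 hq1 hk ht).ne']
end
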